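/- arXiv:1804.02600 — 2 statements merged into one kernel-verified Lean document; each statement's English description precedes it below -/
import Mathlib

section
/- Suppose d : X × X → [0, ∞] is a generalized metric on X making (X, d) complete, T : X → X satisfies d(Tx, Ty) ≤ L · d(x, y) for all x, y with constant L < 1, and for some k ∈ ℕ and some x ∈ X, d(T^{k+1} x, T^k x) < ∞. Then T has a fixed point x*, x* is the unique fixed point of T in the set X* = {y ∈ X : d(T^k x, y) < ∞}, the iterates T^n x converge to x*, and for every y ∈ X* one has d(y, x*) ≤ (1/(1−L)) · d(Ty, y). -/
open Filter

/-- Banach fixed point theorem in a generalized (extended) metric space: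
distances may take the value `∞`. -/
theorem banach_fixed_point_generalized_metric
    {X : Type*} [EMetricSpace X] [CompleteSpace X]
    (T : X → X) (L : NNReal) (hL : L < 1)
    (hT : ∀ x y : X, edist (T x) (T y) ≤ (L : ENNReal) * edist x y)
    (k : ℕ) (x : X) (hfin : edist (T^[k + 1] x) (T^[k] x) < ⊤) :
    ∃ xs : X, T xs = xs ∧
      Tendsto (fun n => T^[n] x) atTop (nhds xs) ∧
      (∀ y : X, edist (T^[k] x) y < ⊤ → T y = y → y = xs) ∧
      (∀ y : X, edist (T^[k] x) y < ⊤ →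
        edist y xs ≤ (1 / (1 - (L : ENNReal))) * edist (T y) y) := by
  have hc : ContractingWith L T := ⟨hL, fun a b => hT a b⟩
  set x' := T^[k] x with hx'
  have hed : edist x' (T x') ≠ ⊤ := by
    rw [edist_comm, ← Function.iterate_succ_apply' T k x]
    exact hfin.ne
  obtain ⟨xs, hfix, htend, hest⟩ := hc.exists_fixedPoint x' hed
  have hfinxs : edist x' xs ≠ ⊤ := by
    refine ne_top_of_le_ne_top ?_ (by simpa using hest 0)
    exact ENNReal.div_lt_top (by simpa using hed) hc.one_sub_K_ne_zero |>.ne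
  refine ⟨xs, hfix, ?_, ?_, ?_⟩
  · rw [← tendsto_add_atTop_iff_nat k]
    have : (fun n => T^[n + k] x) = fun n => T^[n] x' := by
      funext n; rw [hx', ← Function.iterate_add_apply]
    rw [this]; exact htend
  · intro y hy hfy
    rcases hc.eq_or_edist_eq_top_of_fixedPoints (hfy : Function.IsFixedPt T y) hfix with h | h
    · exact h
    · exact absurd h (by
        refine ne_top_of_le_ne_top ?_ (edist_triangle y x' xs)
        exact ENNReal.add_ne_top.2 ⟨by rw [edist_comm]; exact hy.ne, hfinxs⟩)
  · intro y hy
    have hyx : edist y xs ≠ ⊤ := by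
      refine ne_top_of_le_ne_top ?_ (edist_triangle y x' xs)
      exact ENNReal.add_ne_top.2 ⟨by rw [edist_comm]; exact hy.ne, hfinxs⟩
    have := hc.edist_le_of_fixedPoint hyx hfix
    calc edist y xs ≤ edist y (T y) / (1 - (L : ENNReal)) := this
      _ = (1 / (1 - (L : ENNReal))) * edist (T y) y := by
          rw [edist_comm, ENNReal.div_eq_inv_mul, one_div]
end

section
/- Suppose for every n ∈ ℕ there is a unique continuous y_{0,n} on I_n = [a, a+n] satisfying the fixed-point equation y_{0,n}(x) = c(ψ(x)−ψ(a))^{γ−1}/Γ(γ) + I_{a+}^{α;ψ} f(·, y_{0,n}(·), ∫_a^· K(·,τ,y_{0,n}(τ), y_{0,n}(δ(τ))) dτ)(x) together with the bound |y(x) − y_{0,n}(x)| ≤ ξσ(x)/(1 − M(ξ+Lξ²)) on I_n. Then the glued function y₀(x) = y_{0,n(x)}(x) (with n(x) = min{n : x ∈ I_n}) satisfies the same fixed-point equation and the same bound for all x ∈ [a,∞), and y₀ is the unique bounded continuous function with these properties. -/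
open MeasureTheory intervalIntegral Set

/-- The ψ-Riemann–Liouville fractional integral of order α (complex-valued). -/
noncomputable def psiFracIntC (α a : ℝ) (ψ : ℝ → ℝ) (f : ℝ → ℂ) (x : ℝ) : ℂ :=
  (Real.Gamma α)⁻¹ • ∫ s in a..x, (deriv ψ s * (ψ x - ψ s) ^ (α - 1)) • f s

/-- The integral operator `T` associated with the fractional integro-differential
equation `ᴴD^{α,β;ψ}_{a+} y = f(x, y(x), ∫_a^x K(x,τ,y(τ),y(δ(τ))) dτ)`,
`I^{1-γ;ψ}_{a+} y(a) = c`. -/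
noncomputable def Tmap (α γ a : ℝ) (ψ : ℝ → ℝ) (c : ℂ) (f : ℝ → ℂ → ℂ → ℂ)
    (K : ℝ → ℝ → ℂ → ℂ → ℂ) (δ : ℝ → ℝ) (u : ℝ → ℂ) (x : ℝ) : ℂ :=
  (((ψ x - ψ a) ^ (γ - 1) / Real.Gamma γ : ℝ) : ℂ) * c +
    psiFracIntC α a ψ (fun s => f s (u s) (∫ τ in a..s, K s τ (u τ) (u (δ τ)))) x

/-- The Bielecki-type distance relative to the weight `σ` on `[a,b]`. -/
noncomputable def biel (a b : ℝ) (σ : ℝ → ℝ) (u v : ℝ → ℂ) : ℝ :=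
  ⨆ x : Set.Icc a b, ‖u x - v x‖ / σ x

/-!
On each `I_n = [a, a + n]` the solution `y0n n` is unique, and its restriction to `I_m ⊆ I_n`
is again a solution with the same Ulam–Hyers–Rassias bound, so the family is consistent:
`y0n n = y0n m` on `I_m`. The glued function `x ↦ y0n ⌈x - a⌉₊ x` therefore coincides with
`y0n n` on every `I_n`. Since `δ t ∈ [a, t]`, the value `T u x` only depends on `u` on `[a, x]`,
so fixed-point equation, bound and uniqueness transfer from `I_n` to `[a, ∞)`; continuity is
local and boundedness follows from `σ < ω`.
-/

lemma psiFracIntC_congr {α a x : ℝ} {ψ : ℝ → ℝ} {u v : ℝ → ℂ} (hax : a ≤ x)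
    (huv : EqOn u v (Icc a x)) : psiFracIntC α a ψ u x = psiFracIntC α a ψ v x := by
  unfold psiFracIntC
  congr 1
  refine integral_congr fun s hs => ?_
  rw [uIcc_of_le hax] at hs
  simp only [huv hs]

lemma Tmap_congr {α γ a x : ℝ} {ψ : ℝ → ℝ} {c : ℂ} {f : ℝ → ℂ → ℂ → ℂ}
    {K : ℝ → ℝ → ℂ → ℂ → ℂ} {δ : ℝ → ℝ} (hδ : ∀ t ∈ Ici a, δ t ∈ Icc a t)
    {u v : ℝ → ℂ} (hax : a ≤ x) (huv : EqOn u v (Icc a x)) :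
    Tmap α γ a ψ c f K δ u x = Tmap α γ a ψ c f K δ v x := by
  unfold Tmap
  congr 1
  refine psiFracIntC_congr hax fun s hs => ?_
  have hmem : EqOn u v (Icc a s) := huv.mono (Icc_subset_Icc_right hs.2)
  have hinner : (∫ τ in a..s, K s τ (u τ) (u (δ τ))) = ∫ τ in a..s, K s τ (v τ) (v (δ τ)) := by
    refine integral_congr fun τ hτ => ?_
    rw [uIcc_of_le hs.1] at hτ
    have hδτ := hδ τ hτ.1
    rw [hmem hτ, hmem ⟨hδτ.1, hδτ.2.trans hτ.2⟩]
  rw [huv hs, hinner]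

section Gluing

variable {E : Type*} {a : ℝ} {F : ℕ → ℝ → E}

/-- `⌈x - a⌉₊` is the least `n` with `x ∈ [a, a + n]`, the paper's `n(x)`. -/
noncomputable def glueIcc (a : ℝ) (F : ℕ → ℝ → E) (x : ℝ) : E :=
  F ⌈x - a⌉₊ x

lemma mem_Icc_add_ceil {x : ℝ} (hx : a ≤ x) : x ∈ Icc a (a + ⌈x - a⌉₊) :=
  ⟨hx, by linarith [Nat.le_ceil (x - a)]⟩

lemma glueIcc_eqOn (hF : ∀ m n : ℕ, m ≤ n → EqOn (F n) (F m) (Icc a (a + m))) (n : ℕ) :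
    EqOn (glueIcc a F) (F n) (Icc a (a + n)) := fun x hx =>
  (hF _ n (Nat.ceil_le.mpr (by linarith [hx.2])) (mem_Icc_add_ceil hx.1)).symm

lemma continuousOn_glueIcc [TopologicalSpace E]
    (hF : ∀ m n : ℕ, m ≤ n → EqOn (F n) (F m) (Icc a (a + m)))
    (hc : ∀ n : ℕ, ContinuousOn (F n) (Icc a (a + n))) :
    ContinuousOn (glueIcc a F) (Ici a) := by
  intro x hx
  have hxn : x < a + (⌈x - a⌉₊ + 1 : ℕ) := by
    push_cast
    linarith [Nat.le_ceil (x - a)]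
  have hnhds : Icc a (a + (⌈x - a⌉₊ + 1 : ℕ)) ∈ nhdsWithin x (Ici a) := by
    rw [← Ici_inter_Iic]
    exact inter_mem_nhdsWithin _ (Iic_mem_nhds hxn)
  exact (((hc _).congr (glueIcc_eqOn hF _)) x ⟨hx, hxn.le⟩).mono_of_mem_nhdsWithin hnhds

end Gluing

theorem ulam_hyers_rassias_infinite_interval_general
    (a α γ ξ M L ε ω : ℝ) (c : ℂ)
    (ψ : ℝ → ℝ)
    (σ : ℝ → ℝ)
    (hσrange : ∀ x ∈ Set.Ici a, σ x ∈ Set.Ioo ε ω)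
    (hξ0 : 0 ≤ ξ)
    (f : ℝ → ℂ → ℂ → ℂ)
    (K : ℝ → ℝ → ℂ → ℂ → ℂ)
    (δ : ℝ → ℝ) (hδmap : ∀ t ∈ Set.Ici a, δ t ∈ Set.Ici a)
    (hδ : ∀ t ∈ Set.Ici a, δ t ≤ t)
    (hcontr : M * (ξ + L * ξ ^ 2) < 1)
    (y : ℝ → ℂ)
    (hyb : ∃ C : ℝ, ∀ x ∈ Set.Ici a, ‖y x‖ ≤ C)
    -- the family of solutions on the compact intervals `I_n = [a, a+n]`:
    (y0n : ℕ → ℝ → ℂ)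
    (h0cont : ∀ n : ℕ, ContinuousOn (y0n n) (Set.Icc a (a + n)))
    (h0fix : ∀ n : ℕ, ∀ x ∈ Set.Icc a (a + n),
      y0n n x = Tmap α γ a ψ c f K δ (y0n n) x)
    (h0bound : ∀ n : ℕ, ∀ x ∈ Set.Icc a (a + n),
      ‖y x - y0n n x‖ ≤ ξ * σ x / (1 - M * (ξ + L * ξ ^ 2)))
    -- uniqueness of the solution on each `I_n`:
    (h0uniq : ∀ n : ℕ, ∀ z : ℝ → ℂ, ContinuousOn z (Set.Icc a (a + n)) →
      (∀ x ∈ Set.Icc a (a + n), z x = Tmap α γ a ψ c f K δ z x) →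
      (∀ x ∈ Set.Icc a (a + n),
        ‖y x - z x‖ ≤ ξ * σ x / (1 - M * (ξ + L * ξ ^ 2))) →
      ∀ x ∈ Set.Icc a (a + n), z x = y0n n x) :
    ∃ y₀ : ℝ → ℂ,
      (∀ n : ℕ, ∀ x ∈ Set.Icc a (a + n), y₀ x = y0n n x) ∧
      ContinuousOn y₀ (Set.Ici a) ∧
      (∃ C : ℝ, ∀ x ∈ Set.Ici a, ‖y₀ x‖ ≤ C) ∧
      (∀ x ∈ Set.Ici a, y₀ x = Tmap α γ a ψ c f K δ y₀ x) ∧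
      (∀ x ∈ Set.Ici a,
        ‖y x - y₀ x‖ ≤ ξ * σ x / (1 - M * (ξ + L * ξ ^ 2))) ∧
      (∀ y₁ : ℝ → ℂ, ContinuousOn y₁ (Set.Ici a) →
        (∃ C : ℝ, ∀ x ∈ Set.Ici a, ‖y₁ x‖ ≤ C) →
        (∀ x ∈ Set.Ici a, y₁ x = Tmap α γ a ψ c f K δ y₁ x) →
        (∀ x ∈ Set.Ici a,
          ‖y x - y₁ x‖ ≤ ξ * σ x / (1 - M * (ξ + L * ξ ^ 2))) →
        ∀ x ∈ Set.Ici a, y₁ x = y₀ x) := by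
  have hcons : ∀ m n : ℕ, m ≤ n → EqOn (y0n n) (y0n m) (Icc a (a + m)) := by
    intro m n hmn
    have hsub : Icc a (a + m) ⊆ Icc a (a + n) :=
      Icc_subset_Icc_right (by gcongr)
    exact h0uniq m (y0n n) ((h0cont n).mono hsub) (fun t ht => h0fix n t (hsub ht))
      (fun t ht => h0bound n t (hsub ht))
  have hδ' : ∀ t ∈ Ici a, δ t ∈ Icc a t := fun t ht => ⟨hδmap t ht, hδ t ht⟩
  have hglue := glueIcc_eqOn hcons
  have hbound : ∀ x ∈ Ici a,
      ‖y x - glueIcc a y0n x‖ ≤ ξ * σ x / (1 - M * (ξ + L * ξ ^ 2)) := fun x hx =>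
    h0bound _ x (mem_Icc_add_ceil hx)
  refine ⟨glueIcc a y0n, hglue, continuousOn_glueIcc hcons h0cont, ?_, ?_, hbound, ?_⟩
  · obtain ⟨C, hC⟩ := hyb
    refine ⟨C + ξ * ω / (1 - M * (ξ + L * ξ ^ 2)), fun x hx => ?_⟩
    have hden : 0 < 1 - M * (ξ + L * ξ ^ 2) := by linarith
    calc ‖glueIcc a y0n x‖ ≤ ‖y x‖ + ‖y x - glueIcc a y0n x‖ := norm_le_norm_add_norm_sub _ _
      _ ≤ C + ξ * ω / (1 - M * (ξ + L * ξ ^ 2)) := by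
        gcongr
        · exact hC x hx
        · exact (hbound x hx).trans (by gcongr; exact (hσrange x hx).2.le)
  · intro x hx
    have hxn := mem_Icc_add_ceil hx
    rw [hglue _ hxn, h0fix _ x hxn]
    exact Tmap_congr hδ' hx fun t ht => (hglue _ ⟨ht.1, ht.2.trans hxn.2⟩).symm
  · intro y₁ hy₁c _ hy₁fix hy₁bd x hx
    have hxn := mem_Icc_add_ceil hx
    rw [hglue _ hxn]
    exact h0uniq _ y₁ (hy₁c.mono Icc_subset_Ici_self) (fun t ht => hy₁fix t ht.1)
      (fun t ht => hy₁bd t ht.1) x hxn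

theorem ulam_hyers_rassias_infinite_interval
    (a α γ ξ M L ε ω : ℝ) (c : ℂ)
    (hα : 0 < α) (hα1 : α < 1) (hγ0 : 0 < γ) (hγ1 : γ < 1)
    (ψ : ℝ → ℝ) (hψ : Differentiable ℝ ψ) (hψ' : ∀ x, 0 < deriv ψ x)
    (hψc : Continuous (deriv ψ))
    (hε : 0 < ε) (hεω : ε < ω)
    (σ : ℝ → ℝ) (hσc : ContinuousOn σ (Set.Ici a))
    (hσrange : ∀ x ∈ Set.Ici a, σ x ∈ Set.Ioo ε ω)
    (hσmono : MonotoneOn σ (Set.Ici a))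
    (hξ0 : 0 ≤ ξ) (hξ1 : ξ < 1)
    (hξ : ∀ x ∈ Set.Ici a,
      (Real.Gamma α)⁻¹ * ∫ τ in a..x, deriv ψ τ * (ψ x - ψ τ) ^ (α - 1) * σ τ
        ≤ ξ * σ x)
    (f : ℝ → ℂ → ℂ → ℂ) (hfc : Continuous fun p : ℝ × ℂ × ℂ => f p.1 p.2.1 p.2.2)
    (hM : 0 < M)
    (hfLip : ∀ x ∈ Set.Ici a, ∀ u v g h : ℂ,
      ‖f x u g - f x v h‖ ≤ M * (‖u - v‖ + ‖g - h‖))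
    (K : ℝ → ℝ → ℂ → ℂ → ℂ)
    (hKc : Continuous fun p : ℝ × ℝ × ℂ × ℂ => K p.1 p.2.1 p.2.2.1 p.2.2.2)
    (hL : 0 < L)
    (hKLip : ∀ x ∈ Set.Ici a, ∀ τ ∈ Set.Ici a, ∀ u v w z : ℂ,
      ‖K x τ u w - K x τ v z‖ ≤ L * ‖w - z‖)
    (δ : ℝ → ℝ) (hδc : Continuous δ) (hδmap : ∀ t ∈ Set.Ici a, δ t ∈ Set.Ici a)
    (hδ : ∀ t ∈ Set.Ici a, δ t ≤ t)
    (hcontr : M * (ξ + L * ξ ^ 2) < 1)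
    (y : ℝ → ℂ) (hy : ContinuousOn y (Set.Ici a))
    (hyb : ∃ C : ℝ, ∀ x ∈ Set.Ici a, ‖y x‖ ≤ C)
    -- the family of solutions on the compact intervals `I_n = [a, a+n]`:
    (y0n : ℕ → ℝ → ℂ)
    (h0cont : ∀ n : ℕ, ContinuousOn (y0n n) (Set.Icc a (a + n)))
    (h0fix : ∀ n : ℕ, ∀ x ∈ Set.Icc a (a + n),
      y0n n x = Tmap α γ a ψ c f K δ (y0n n) x)
    (h0bound : ∀ n : ℕ, ∀ x ∈ Set.Icc a (a + n),
      ‖y x - y0n n x‖ ≤ ξ * σ x / (1 - M * (ξ + L * ξ ^ 2)))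
    -- uniqueness of the solution on each `I_n`:
    (h0uniq : ∀ n : ℕ, ∀ z : ℝ → ℂ, ContinuousOn z (Set.Icc a (a + n)) →
      (∀ x ∈ Set.Icc a (a + n), z x = Tmap α γ a ψ c f K δ z x) →
      (∀ x ∈ Set.Icc a (a + n),
        ‖y x - z x‖ ≤ ξ * σ x / (1 - M * (ξ + L * ξ ^ 2))) →
      ∀ x ∈ Set.Icc a (a + n), z x = y0n n x) :
    ∃ y₀ : ℝ → ℂ,
      (∀ n : ℕ, ∀ x ∈ Set.Icc a (a + n), y₀ x = y0n n x) ∧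
      ContinuousOn y₀ (Set.Ici a) ∧
      (∃ C : ℝ, ∀ x ∈ Set.Ici a, ‖y₀ x‖ ≤ C) ∧
      (∀ x ∈ Set.Ici a, y₀ x = Tmap α γ a ψ c f K δ y₀ x) ∧
      (∀ x ∈ Set.Ici a,
        ‖y x - y₀ x‖ ≤ ξ * σ x / (1 - M * (ξ + L * ξ ^ 2))) ∧
      (∀ y₁ : ℝ → ℂ, ContinuousOn y₁ (Set.Ici a) →
        (∃ C : ℝ, ∀ x ∈ Set.Ici a, ‖y₁ x‖ ≤ C) →
        (∀ x ∈ Set.Ici a, y₁ x = Tmap α γ a ψ c f K δ y₁ x) →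
        (∀ x ∈ Set.Ici a,
          ‖y x - y₁ x‖ ≤ ξ * σ x / (1 - M * (ξ + L * ξ ^ 2))) →
        ∀ x ∈ Set.Ici a, y₁ x = y₀ x) :=
  ulam_hyers_rassias_infinite_interval_general a α γ ξ M L ε ω c ψ σ hσrange hξ0 f K δ hδmap hδ
    hcontr y hyb y0n h0cont h0fix h0bound h0uniq
end
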